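/- If G is a dead right end and H is a dead left end, then the misère outcome of G + H is: N^- if l(G) = r(H); L^- if l(G) < r(H); R^- if l(G) > r(H), where l denotes left-length and r denotes right-length. -/

import Mathlib

namespace SetTheory

/-- Combinatorial pre-games (removed from Mathlib; reproduced with the old definition). -/
inductive PGame : Type (u + 1)
  | mk : ∀ α β : Type u, (α → PGame) → (β → PGame) → PGame

namespace PGame

def LeftMoves : PGame → Type u
  | mk l _ _ _ => l

def RightMoves : PGame → Type u
  | mk _ r _ _ => r

def moveLeft : ∀ g : PGame, LeftMoves g → PGame
  | mk _l _ L _ => L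

def moveRight : ∀ g : PGame, RightMoves g → PGame
  | mk _ _r _ R => R

inductive IsOption : PGame → PGame → Prop
  | moveLeft {x : PGame} (i : x.LeftMoves) : IsOption (x.moveLeft i) x
  | moveRight {x : PGame} (i : x.RightMoves) : IsOption (x.moveRight i) x

instance : Zero PGame :=
  ⟨⟨PEmpty, PEmpty, PEmpty.elim, PEmpty.elim⟩⟩

def neg : PGame → PGame
  | ⟨l, r, L, R⟩ => ⟨r, l, fun i => neg (R i), fun i => neg (L i)⟩

instance : Neg PGame :=
  ⟨neg⟩

noncomputable instance : Add PGame.{u} :=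
  ⟨fun x y => by
    induction x generalizing y with | mk xl xr _ _ IHxl IHxr => _
    induction y with | mk yl yr yL yR IHyl IHyr => _
    have y := mk yl yr yL yR
    refine ⟨xl ⊕ yl, xr ⊕ yr, Sum.rec ?_ ?_, Sum.rec ?_ ?_⟩
    · exact fun i => IHxl i y
    · exact IHyl
    · exact fun i => IHxr i y
    · exact IHyr⟩

end PGame

end SetTheory

open SetTheory

namespace Misere

/-- `F` is a follower of `G`: reachable from `G` by a (possibly empty) sequence of moves. -/
def Follower (F G : PGame) : Prop := Relation.ReflTransGen PGame.IsOption F G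

def IsLeftEnd (G : PGame) : Prop := IsEmpty G.LeftMoves
def IsRightEnd (G : PGame) : Prop := IsEmpty G.RightMoves

/-- A dead left end: every follower (including itself) is a left end. -/
def DeadLeftEnd (G : PGame) : Prop := ∀ F, Follower F G → IsLeftEnd F
def DeadRightEnd (G : PGame) : Prop := ∀ F, Follower F G → IsRightEnd F
def DeadEnd (G : PGame) : Prop := DeadLeftEnd G ∨ DeadRightEnd G

/-- A game is dead-ending if every end follower is a dead end. -/
def DeadEnding (G : PGame) : Prop :=
  ∀ F, Follower F G → (IsLeftEnd F → DeadLeftEnd F) ∧ (IsRightEnd F → DeadRightEnd F)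

/-- The universe of dead-ending games. -/
def E : Set PGame := {G | DeadEnding G}

/-- `(misereWins G).1` : Left, moving first, wins `G` under misère play;
    `(misereWins G).2` : Right, moving first, wins `G` under misère play. -/
def misereWins : PGame → Prop × Prop
  | PGame.mk l r L R =>
      (IsEmpty l ∨ ∃ i, ¬ (misereWins (L i)).2,
       IsEmpty r ∨ ∃ j, ¬ (misereWins (R j)).1)

def LeftWinsGF (G : PGame) : Prop := (misereWins G).1
def RightWinsGF (G : PGame) : Prop := (misereWins G).2

inductive MOutcome : Type
  | L | N | P | R
deriving DecidableEq

/-- Partial order on misère outcomes: `R` minimal, `L` maximal, `N` and `P` incomparable. -/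
def MOutcome.le : MOutcome → MOutcome → Prop
  | .R, _ => True
  | _, .L => True
  | a, b => a = b

instance : LE MOutcome := ⟨MOutcome.le⟩

/-- The misère outcome of a game. -/
noncomputable def outcome (G : PGame) : MOutcome := by
  classical
  exact if LeftWinsGF G then (if RightWinsGF G then .N else .L)
        else (if RightWinsGF G then .R else .P)

/-- `G ≡ H (mod U)`. -/
def equivMod (U : Set PGame) (G H : PGame) : Prop :=
  ∀ X ∈ U, outcome (G + X) = outcome (H + X)

/-- `G ≧ H (mod U)`. -/
def geMod (U : Set PGame) (G H : PGame) : Prop :=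
  ∀ X ∈ U, outcome (H + X) ≤ outcome (G + X)

/-- `LeftChain G n`: there is a sequence of `n` consecutive Left moves from `G`
ending at the zero position. -/
inductive LeftChain : PGame → ℕ → Prop
  | zero (G : PGame) : IsLeftEnd G → IsRightEnd G → LeftChain G 0
  | succ (G : PGame) (i : G.LeftMoves) (n : ℕ) :
      LeftChain (G.moveLeft i) n → LeftChain G (n + 1)

inductive RightChain : PGame → ℕ → Prop
  | zero (G : PGame) : IsLeftEnd G → IsRightEnd G → RightChain G 0
  | succ (G : PGame) (j : G.RightMoves) (n : ℕ) :
      RightChain (G.moveRight j) n → RightChain G (n + 1)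

/-- Left-length: minimum number of consecutive Left moves needed to reach zero. -/
noncomputable def leftLength (G : PGame) : ℕ := sInf {n | LeftChain G n}

/-- Right-length: minimum number of consecutive Right moves needed to reach zero. -/
noncomputable def rightLength (G : PGame) : ℕ := sInf {n | RightChain G n}

/-- Normal-play canonical form of a nonnegative integer. -/
def natGame : ℕ → PGame
  | 0 => 0
  | n + 1 => PGame.mk PUnit PEmpty (fun _ => natGame n) PEmpty.elim

/-- Normal-play canonical form of an integer (negatives are conjugates). -/
def intGame (n : ℤ) : PGame :=
  if 0 ≤ n then natGame n.toNat else -natGame (-n).toNat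

/-- Normal-play canonical form of the dyadic rational `m / 2 ^ j`. -/
def dyadicGame : ℤ → ℕ → PGame
  | m, 0 => intGame m
  | m, j + 1 =>
      if m % 2 = 0 then dyadicGame (m / 2) j
      else PGame.mk PUnit PUnit (fun _ => dyadicGame ((m - 1) / 2) j)
            (fun _ => dyadicGame ((m + 1) / 2) j)

/-- The closure of dead ends: finite disjunctive sums of dead ends. -/
def DeadEndClosure : Set PGame :=
  {G | ∃ l : List PGame, (∀ x ∈ l, DeadEnd x) ∧ G = l.sum}

end Misere

/-! In `G + H` Left can only move in `G` and Right only in `H`, so the game is a race: each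
player walks down their own component, and under misère play whoever runs out of moves first
wins. A Left end of a dead right end has no moves at all, so Left runs out after `l(G)` moves at
the earliest, Right after `r(H)`. A joint induction on `G` and `H`, driven by the recursion
`l(G) ≤ n ↔ G is a Left end ∨ l(G^L) < n for some Left option G^L`, shows that Left moving first
wins iff `l(G) ≤ r(H)` and Right moving first wins iff `r(H) ≤ l(G)`. -/

namespace Misere

open PGame

theorem DeadRightEnd.isRightEnd {G : PGame} (hG : DeadRightEnd G) : IsRightEnd G :=
  hG G .refl

theorem DeadLeftEnd.isLeftEnd {G : PGame} (hG : DeadLeftEnd G) : IsLeftEnd G :=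
  hG G .refl

theorem DeadRightEnd.moveLeft {G : PGame} (hG : DeadRightEnd G) (i : G.LeftMoves) :
    DeadRightEnd (G.moveLeft i) :=
  fun F hF => hG F (hF.tail (.moveLeft i))

theorem DeadLeftEnd.moveRight {G : PGame} (hG : DeadLeftEnd G) (j : G.RightMoves) :
    DeadLeftEnd (G.moveRight j) :=
  fun F hF => hG F (hF.tail (.moveRight j))

theorem leftWinsGF_iff (G : PGame) :
    LeftWinsGF G ↔ IsLeftEnd G ∨ ∃ i, ¬RightWinsGF (G.moveLeft i) := by
  cases G; rfl

theorem rightWinsGF_iff (G : PGame) :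
    RightWinsGF G ↔ IsRightEnd G ∨ ∃ j, ¬LeftWinsGF (G.moveRight j) := by
  cases G; rfl

theorem leftWinsGF_add_iff {G H : PGame} (hH : IsLeftEnd H) :
    LeftWinsGF (G + H) ↔ IsLeftEnd G ∨ ∃ i, ¬RightWinsGF (G.moveLeft i + H) := by
  obtain ⟨gl, gr, gL, gR⟩ := G
  obtain ⟨hl, hr, hL, hR⟩ := H
  have : IsEmpty hl := hH
  rw [leftWinsGF_iff]
  exact or_congr (isEmpty_sum.trans (and_iff_left this))
    (Sum.exists.trans (or_iff_left fun ⟨j, _⟩ => isEmptyElim j))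

theorem rightWinsGF_add_iff {G H : PGame} (hG : IsRightEnd G) :
    RightWinsGF (G + H) ↔ IsRightEnd H ∨ ∃ j, ¬LeftWinsGF (G + H.moveRight j) := by
  obtain ⟨gl, gr, gL, gR⟩ := G
  obtain ⟨hl, hr, hL, hR⟩ := H
  have : IsEmpty gr := hG
  rw [rightWinsGF_iff]
  exact or_congr (isEmpty_sum.trans (and_iff_right this))
    (Sum.exists.trans (or_iff_right fun ⟨i, _⟩ => isEmptyElim i))

theorem DeadRightEnd.exists_leftChain {G : PGame} (hG : DeadRightEnd G) :
    ∃ n, LeftChain G n := by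
  induction G with
  | mk l r L R ihL _ =>
    by_cases hl : IsEmpty l
    · exact ⟨0, .zero _ hl hG.isRightEnd⟩
    · obtain ⟨i⟩ := not_isEmpty_iff.mp hl
      obtain ⟨n, hn⟩ := ihL i (hG.moveLeft i)
      exact ⟨n + 1, .succ (.mk l r L R) i n hn⟩

theorem DeadLeftEnd.exists_rightChain {G : PGame} (hG : DeadLeftEnd G) :
    ∃ n, RightChain G n := by
  induction G with
  | mk l r L R _ ihR =>
    by_cases hr : IsEmpty r
    · exact ⟨0, .zero _ hG.isLeftEnd hr⟩
    · obtain ⟨j⟩ := not_isEmpty_iff.mp hr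
      obtain ⟨n, hn⟩ := ihR j (hG.moveRight j)
      exact ⟨n + 1, .succ (.mk l r L R) j n hn⟩

theorem DeadRightEnd.leftChain_leftLength {G : PGame} (hG : DeadRightEnd G) :
    LeftChain G (leftLength G) :=
  Nat.sInf_mem hG.exists_leftChain

theorem DeadRightEnd.leftLength_le_iff {G : PGame} (hG : DeadRightEnd G) (n : ℕ) :
    leftLength G ≤ n ↔ IsLeftEnd G ∨ ∃ i, leftLength (G.moveLeft i) < n := by
  constructor
  · intro hle
    have hchain := hG.leftChain_leftLength
    generalize leftLength G = k at hchain hle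
    cases hchain with
    | zero _ hl _ => exact .inl hl
    | succ _ i m hm =>
      have : leftLength (G.moveLeft i) ≤ m := Nat.sInf_le hm
      exact .inr ⟨i, by omega⟩
  · rintro (hl | ⟨i, hi⟩)
    · exact (Nat.sInf_le (LeftChain.zero G hl hG.isRightEnd)).trans n.zero_le
    · have : leftLength G ≤ leftLength (G.moveLeft i) + 1 :=
        Nat.sInf_le (LeftChain.succ G i _ (hG.moveLeft i).leftChain_leftLength)
      omega

theorem DeadLeftEnd.rightChain_rightLength {G : PGame} (hG : DeadLeftEnd G) :
    RightChain G (rightLength G) :=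
  Nat.sInf_mem hG.exists_rightChain

theorem DeadLeftEnd.rightLength_le_iff {G : PGame} (hG : DeadLeftEnd G) (n : ℕ) :
    rightLength G ≤ n ↔ IsRightEnd G ∨ ∃ j, rightLength (G.moveRight j) < n := by
  constructor
  · intro hle
    have hchain := hG.rightChain_rightLength
    generalize rightLength G = k at hchain hle
    cases hchain with
    | zero _ _ hr => exact .inl hr
    | succ _ j m hm =>
      have : rightLength (G.moveRight j) ≤ m := Nat.sInf_le hm
      exact .inr ⟨j, by omega⟩
  · rintro (hr | ⟨j, hj⟩)
    · exact (Nat.sInf_le (RightChain.zero G hG.isLeftEnd hr)).trans n.zero_le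
    · have : rightLength G ≤ rightLength (G.moveRight j) + 1 :=
        Nat.sInf_le (RightChain.succ G j _ (hG.moveRight j).rightChain_rightLength)
      omega

theorem wins_add_deadRightEnd_deadLeftEnd {G H : PGame} (hG : DeadRightEnd G)
    (hH : DeadLeftEnd H) :
    (LeftWinsGF (G + H) ↔ leftLength G ≤ rightLength H) ∧
      (RightWinsGF (G + H) ↔ rightLength H ≤ leftLength G) := by
  induction G generalizing H with
  | mk gl gr gL gR ihG =>
  induction H with
  | mk hl hr hL hR _ ihH =>
  constructor
  · rw [leftWinsGF_add_iff hH.isLeftEnd, hG.leftLength_le_iff]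
    exact or_congr_right <| exists_congr fun i =>
      (ihG i (hG.moveLeft i) hH).2.not.trans not_le
  · rw [rightWinsGF_add_iff hG.isRightEnd, hH.rightLength_le_iff]
    exact or_congr_right <| exists_congr fun j =>
      (ihH j (hH.moveRight j)).1.not.trans not_le

theorem outcome_eq_N {G : PGame} (hL : LeftWinsGF G) (hR : RightWinsGF G) :
    outcome G = .N := by
  simp [outcome, hL, hR]

theorem outcome_eq_L {G : PGame} (hL : LeftWinsGF G) (hR : ¬RightWinsGF G) :
    outcome G = .L := by
  simp [outcome, hL, hR]

theorem outcome_eq_R {G : PGame} (hL : ¬LeftWinsGF G) (hR : RightWinsGF G) :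
    outcome G = .R := by
  simp [outcome, hL, hR]

end Misere

open Misere SetTheory PGame

/-- outcome of a sum of a dead right end and a dead left end. -/
theorem stmt4 (G H : PGame) (hG : DeadRightEnd G) (hH : DeadLeftEnd H) :
    (leftLength G = rightLength H → outcome (G + H) = MOutcome.N) ∧
    (leftLength G < rightLength H → outcome (G + H) = MOutcome.L) ∧
    (rightLength H < leftLength G → outcome (G + H) = MOutcome.R) := by
  obtain ⟨hL, hR⟩ := wins_add_deadRightEnd_deadLeftEnd hG hH
  refine ⟨fun h => outcome_eq_N (hL.2 h.le) (hR.2 h.ge), fun h => ?_, fun h => ?_⟩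
  · exact outcome_eq_L (hL.2 h.le) (hR.not.2 (not_le.2 h))
  · exact outcome_eq_R (hL.not.2 (not_le.2 h)) (hR.2 h.le)
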